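/- Successive application of the one-level quasi-analytic wavelet packet analysis and synthesis to a real-valued signal x ∈ Π[N] produces twice the periodic analytic signals associated with x: with coefficients z₊^μ[l] = ⟨x, ψ_μ[·−2l]⟩ − i·⟨x, φ_μ[·−2l]⟩ and quasi-analytic wavelet packets Ψ₊_μ = ψ_μ + i·φ_μ, one has Σ_{μ=0}^{1} Σ_{l=0}^{N/2−1} z₊^μ[l]·Ψ₊_μ[k−2l] = 2·( x[k] + i·H(x)[k] ) for every k; and symmetrically, with z₋^μ[l] = conj(z₊^μ[l]) and Ψ₋_μ = ψ_μ − i·φ_μ, one has Σ_{μ,l} z₋^μ[l]·Ψ₋_μ[k−2l] = 2·( x[k] − i·H(x)[k] ). -/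

import Mathlib

/-!
Write `Ψ₊_μ = ψ_μ + i φ_μ` and `c_μ` for its DFT. Away from the frequencies `0` and `N/2`,
`φ̂_μ = h ψ̂_μ` with `h` the multiplier of `H`, so `c_μ = 2 ψ̂_μ` for `0 < n < N/2` and `c_μ = 0`
for `N/2 < n < N`. The coefficient `z₊^μ[l] = ⟨x, Ψ₊_μ[· - 2l]⟩` is the inverse DFT of
`conj c_μ · x̂` at `2l`, and sampling at even points aliases `n` with `n + N/2`, so
`∑_l z₊^μ[l] Ψ₊_μ[k - 2l]` is half the inverse DFT of
`c_μ[n] (conj c_μ[n] x̂[n] + conj c_μ[n + N/2] x̂[n + N/2])`. The aliased terms vanish because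
`c_μ[n] c_μ[n + N/2] = 0`, and `|c_0[n]|² + |c_1[n]|² = 4 (1 + i h[n])` by `β² + |α|² = 2`, the
normalisation by `U^{4r}`; what remains is `2 (x + i H x)`. The second identity is the conjugate
of the first, since `ψ_μ`, `φ_μ` and `H x` are real: their spectra are conjugate-symmetric.
-/

open Finset

noncomputable def omegaN (N : ℕ) : ℂ := Complex.exp (2 * Real.pi * Complex.I / N)

noncomputable def U4r (N r : ℕ) (n : ℤ) : ℝ :=
  ((Real.cos (Real.pi * n / N)) ^ (4 * r) + (Real.sin (Real.pi * n / N)) ^ (4 * r)) / 2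

noncomputable def betaF (N r : ℕ) (n : ℤ) : ℂ :=
  Complex.ofReal ((Real.cos (Real.pi * n / N)) ^ (2 * r) / Real.sqrt (U4r N r n))

noncomputable def alphaF (N r : ℕ) (n : ℤ) : ℂ :=
  omegaN N ^ n * Complex.ofReal ((Real.sin (Real.pi * n / N)) ^ (2 * r) / Real.sqrt (U4r N r n))

noncomputable def psi0 (N r : ℕ) (k : ℤ) : ℂ :=
  (N : ℂ)⁻¹ * ∑ n ∈ Finset.range N, omegaN N ^ (k * (n : ℤ)) * betaF N r n

noncomputable def psi1 (N r : ℕ) (k : ℤ) : ℂ :=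
  (N : ℂ)⁻¹ * ∑ n ∈ Finset.range N, omegaN N ^ (k * (n : ℤ)) * alphaF N r n

noncomputable def ip (N : ℕ) (x y : ℤ → ℂ) : ℂ :=
  ∑ k ∈ Finset.range N, x k * (starRingEnd ℂ) (y k)

/-- DFT of the first-level complementary wavelet packet φ₀. -/
noncomputable def phi0hat (N r : ℕ) (n : ℕ) : ℂ :=
  if n = 0 then (Real.sqrt 2 : ℂ)
  else if 2 * n = N then 0
  else if 2 * n < N then -Complex.I * betaF N r n
  else Complex.I * betaF N r n

/-- DFT of the first-level complementary wavelet packet φ₁. -/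
noncomputable def phi1hat (N r : ℕ) (n : ℕ) : ℂ :=
  if n = 0 then 0
  else if 2 * n = N then -(Real.sqrt 2 : ℂ)
  else if 2 * n < N then -Complex.I * alphaF N r n
  else Complex.I * alphaF N r n

/-- The first-level complementary wavelet packets φ₀, φ₁, via the inverse DFT. -/
noncomputable def phiW (N r : ℕ) (μ : Fin 2) (k : ℤ) : ℂ :=
  (N : ℂ)⁻¹ * ∑ n ∈ Finset.range N,
    omegaN N ^ (k * (n : ℤ)) * (if μ.val = 0 then phi0hat N r n else phi1hat N r n)

noncomputable def psiW (N r : ℕ) (μ : Fin 2) (k : ℤ) : ℂ :=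
  if μ.val = 0 then psi0 N r k else psi1 N r k

noncomputable def dft (N : ℕ) (x : ℤ → ℂ) (n : ℤ) : ℂ :=
  ∑ k ∈ Finset.range N, x k * omegaN N ^ (-((k : ℤ) * n))

/-- Discrete periodic Hilbert transform. -/
noncomputable def HT (N : ℕ) (x : ℤ → ℂ) (k : ℤ) : ℂ :=
  (N : ℂ)⁻¹ * ∑ n ∈ Finset.range N,
    (if n = 0 ∨ 2 * n = N then 0 else if 2 * n < N then -Complex.I else Complex.I) *
      dft N x n * omegaN N ^ (k * (n : ℤ))

open ComplexConjugate

section RootsOfUnity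

variable {N : ℕ}

lemma omegaN_isPrimitiveRoot (hN : N ≠ 0) : IsPrimitiveRoot (omegaN N) N :=
  Complex.isPrimitiveRoot_exp N hN

lemma omegaN_ne_zero (N : ℕ) : omegaN N ≠ 0 := Complex.exp_ne_zero _

lemma omegaN_zpow_eq_of_dvd (hN : N ≠ 0) {a b : ℤ} (h : (N : ℤ) ∣ a - b) :
    omegaN N ^ a = omegaN N ^ b := by
  rw [← sub_add_cancel a b, zpow_add₀ (omegaN_ne_zero N),
    ((omegaN_isPrimitiveRoot hN).zpow_eq_one_iff_dvd _).2 h, one_mul]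

lemma conj_omegaN_zpow (N : ℕ) (a : ℤ) : conj (omegaN N ^ a) = omegaN N ^ (-a) := by
  have h : conj (omegaN N) = (omegaN N)⁻¹ := by
    rw [omegaN, ← Complex.exp_conj, ← Complex.exp_neg]
    congr 1
    simp only [map_div₀, map_mul, map_ofNat, Complex.conj_ofReal, Complex.conj_I, mul_neg,
      map_natCast]
    ring
  rw [map_zpow₀, h, zpow_neg, inv_zpow]

lemma sum_omegaN_zpow_mul (hN : N ≠ 0) (d : ℤ) :
    ∑ l ∈ range N, omegaN N ^ (d * l) = if (N : ℤ) ∣ d then (N : ℂ) else 0 := by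
  have hpow (l : ℕ) : omegaN N ^ (d * l) = (omegaN N ^ d) ^ l := by
    rw [zpow_mul, zpow_natCast]
  simp only [hpow]
  have hprim := omegaN_isPrimitiveRoot hN
  split_ifs with h
  · simp [(hprim.zpow_eq_one_iff_dvd d).2 h]
  · have hne : omegaN N ^ d ≠ 1 := fun h1 => h ((hprim.zpow_eq_one_iff_dvd d).1 h1)
    rw [geom_sum_eq hne, ← zpow_natCast, ← zpow_mul, mul_comm,
      zpow_mul, hprim.zpow_eq_one, one_zpow, sub_self, zero_div]

lemma omegaN_two_mul_sq (N : ℕ) : omegaN (2 * N) ^ (2 : ℤ) = omegaN N := by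
  rcases eq_or_ne N 0 with rfl | hN
  · simp [omegaN]
  rw [omegaN, omegaN, ← Complex.exp_int_mul]
  congr 1
  push_cast
  field_simp

lemma omegaN_two_mul_zpow_self (hN : N ≠ 0) : omegaN (2 * N) ^ (N : ℤ) = -1 := by
  rw [omegaN, ← Complex.exp_int_mul, ← Complex.exp_pi_mul_I]
  congr 1
  push_cast
  field_simp

end RootsOfUnity

noncomputable def idft (N : ℕ) (c : ℕ → ℂ) (k : ℤ) : ℂ :=
  (N : ℂ)⁻¹ * ∑ n ∈ range N, omegaN N ^ (k * (n : ℤ)) * c n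

section DFT

variable {N : ℕ}

lemma sum_range_ite_dvd_sub (hN : N ≠ 0) (f : ℕ → ℂ) (k : ℤ) :
    ∑ m ∈ range N, (if (N : ℤ) ∣ k - m then f m else 0) = f (k % N).toNat := by
  have hNpos : (0 : ℤ) < N := by exact_mod_cast Nat.pos_of_ne_zero hN
  have hdvd_iff : ∀ m ∈ range N, (N : ℤ) ∣ k - m ↔ (k % N).toNat = m := by
    intro m hm
    have hm : (m : ℤ) < N := by exact_mod_cast mem_range.1 hm
    have := Int.emod_nonneg k hNpos.ne'
    rw [← Int.modEq_iff_dvd, Int.ModEq, Int.emod_eq_of_lt (by positivity) hm]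
    omega
  have hlt := Int.emod_lt_of_pos k hNpos
  rw [sum_congr rfl fun m hm => if_congr (hdvd_iff m hm) rfl rfl, sum_ite_eq,
    if_pos (mem_range.2 (by omega))]

lemma idft_dft (hN : N ≠ 0) {x : ℤ → ℂ} (hx : Function.Periodic x N) (k : ℤ) :
    idft N (fun n => dft N x n) k = x k := by
  have hinner (m : ℕ) :
      ∑ n ∈ range N, omegaN N ^ (k * (n : ℤ)) * (x m * omegaN N ^ (-((m : ℤ) * n)))
        = x m * if (N : ℤ) ∣ k - m then (N : ℂ) else 0 := by
    rw [← sum_omegaN_zpow_mul hN, mul_sum]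
    refine sum_congr rfl fun n _ => ?_
    rw [sub_mul, sub_eq_add_neg, zpow_add₀ (omegaN_ne_zero N)]
    ring
  have hperiod : x (k % N).toNat = x k := by
    rw [Int.toNat_of_nonneg (Int.emod_nonneg k (by omega)), Int.emod_def, mul_comm]
    simpa using hx.sub_int_mul_eq (k / N)
  have hswap : ∑ n ∈ range N, omegaN N ^ (k * (n : ℤ)) * dft N x n
      = ∑ m ∈ range N, ∑ n ∈ range N,
          omegaN N ^ (k * (n : ℤ)) * (x m * omegaN N ^ (-((m : ℤ) * n))) := by
    simp only [dft, mul_sum]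
    exact sum_comm
  rw [idft, hswap, sum_congr rfl fun m _ => hinner m]
  simp only [mul_ite, mul_zero]
  rw [sum_range_ite_dvd_sub hN, hperiod]
  field_simp [Nat.cast_ne_zero.2 hN]

lemma sum_range_sub_mod [NeZero N] (f : ℕ → ℂ) :
    ∑ n ∈ range N, f ((N - n) % N) = ∑ n ∈ range N, f n := by
  rw [sum_range, sum_range]
  exact Fintype.sum_equiv (Equiv.neg (Fin N)) _ _ fun _ => rfl

lemma omegaN_zpow_neg_mul_sub_mod (hN : N ≠ 0) (a : ℤ) {n : ℕ} (hn : n < N) :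
    omegaN N ^ (-(a * ((N - n) % N : ℕ))) = omegaN N ^ (a * n) := by
  apply omegaN_zpow_eq_of_dvd hN
  have hdvd : N ∣ (N - n) % N + n := by
    rw [Nat.dvd_iff_mod_eq_zero, Nat.mod_add_mod, Nat.sub_add_cancel hn.le, Nat.mod_self]
  rw [show -(a * ((N - n) % N : ℕ)) - a * n = -a * (((N - n) % N : ℕ) + n) by ring]
  exact Dvd.dvd.mul_left (by exact_mod_cast hdvd) _

-- `(N - n) % N` is the index in `range N` of the frequency `-n`.
def IsConjSymm (N : ℕ) (c : ℕ → ℂ) : Prop :=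
  ∀ n < N, c ((N - n) % N) = conj (c n)

lemma IsConjSymm.of_sub {c : ℕ → ℂ} (h0 : conj (c 0) = c 0)
    (h : ∀ n, 0 < n → n < N → c (N - n) = conj (c n)) : IsConjSymm N c := by
  intro n hn
  rcases Nat.eq_zero_or_pos n with rfl | hpos
  · simpa using h0.symm
  · rw [Nat.mod_eq_of_lt (by omega), h n hpos hn]

lemma IsConjSymm.mul {c d : ℕ → ℂ} (hc : IsConjSymm N c) (hd : IsConjSymm N d) :
    IsConjSymm N (fun n => c n * d n) := fun n hn => by
  simp only [hc n hn, hd n hn, map_mul]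

lemma conj_idft (hN : N ≠ 0) {c : ℕ → ℂ} (hc : IsConjSymm N c) (k : ℤ) :
    conj (idft N c k) = idft N c k := by
  simp only [idft, map_mul, map_inv₀, map_natCast, map_sum, conj_omegaN_zpow]
  congr 1
  have : NeZero N := ⟨hN⟩
  rw [← sum_range_sub_mod]
  refine sum_congr rfl fun n hn => ?_
  rw [omegaN_zpow_neg_mul_sub_mod hN k (mem_range.1 hn), hc n (mem_range.1 hn), Complex.conj_conj]

lemma isConjSymm_dft {x : ℤ → ℂ} (hx : ∀ k, (x k).im = 0) : IsConjSymm N (fun n => dft N x n) := by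
  intro n hn
  simp only [dft, map_sum, map_mul, conj_omegaN_zpow, Complex.conj_eq_iff_im.2 (hx _)]
  refine sum_congr rfl fun m _ => ?_
  rw [omegaN_zpow_neg_mul_sub_mod (by omega) m hn, neg_neg]

lemma idft_congr {c d : ℕ → ℂ} (h : ∀ n < N, c n = d n) (k : ℤ) : idft N c k = idft N d k := by
  simp only [idft]
  congr 1
  exact sum_congr rfl fun n hn => by rw [h n (mem_range.1 hn)]

lemma idft_add (c d : ℕ → ℂ) (k : ℤ) :
    idft N (fun n => c n + d n) k = idft N c k + idft N d k := by
  simp only [idft, mul_add, sum_add_distrib]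

lemma idft_const_mul (a : ℂ) (c : ℕ → ℂ) (k : ℤ) :
    idft N (fun n => a * c n) k = a * idft N c k := by
  simp only [idft, mul_sum]
  exact sum_congr rfl fun n _ => by ring

lemma idft_sum {ι : Type*} (s : Finset ι) (c : ι → ℕ → ℂ) (k : ℤ) :
    idft N (fun n => ∑ i ∈ s, c i n) k = ∑ i ∈ s, idft N (c i) k := by
  simp only [idft, mul_sum]
  rw [sum_comm]

lemma ip_sub_I_mul_ip (x f g : ℤ → ℂ) :
    ip N x f - Complex.I * ip N x g = ip N x (fun t => f t + Complex.I * g t) := by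
  simp only [ip, mul_sum, ← sum_sub_distrib, map_add, map_mul, Complex.conj_I]
  exact sum_congr rfl fun _ _ => by ring

lemma ip_translate_idft (N : ℕ) (x : ℤ → ℂ) (c : ℕ → ℂ) (s : ℤ) :
    ip N x (fun t => idft N c (t - s)) = idft N (fun n => conj (c n) * dft N x n) s := by
  simp only [ip, idft, dft, map_mul, map_inv₀, map_natCast, map_sum, conj_omegaN_zpow,
    mul_sum]
  rw [sum_comm]
  refine sum_congr rfl fun n _ => sum_congr rfl fun m _ => ?_
  rw [show -((m - s) * (n : ℤ)) = s * n + -(m * n) by ring, zpow_add₀ (omegaN_ne_zero N)]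
  ring

end DFT

-- For `n < 2 * M`, the other index below `2 * M` that is congruent to `n` modulo `M`.
def shiftHalf (M n : ℕ) : ℕ := if n < M then n + M else n - M

section Downsampling

variable {M : ℕ}

lemma sum_omegaN_two_mul_zpow (hM : M ≠ 0) (d : ℤ) :
    ∑ l ∈ range M, omegaN (2 * M) ^ (2 * (l : ℤ) * d) = if (M : ℤ) ∣ d then (M : ℂ) else 0 := by
  rw [← sum_omegaN_zpow_mul hM d]
  refine sum_congr rfl fun l _ => ?_
  rw [show 2 * (l : ℤ) * d = 2 * (d * l) by ring, zpow_mul, omegaN_two_mul_sq]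

lemma dvd_sub_iff_eq_or_eq_shiftHalf {m n : ℕ} (hm : m < 2 * M) (hn : n < 2 * M) :
    (M : ℤ) ∣ (m : ℤ) - n ↔ m = n ∨ m = shiftHalf M n := by
  unfold shiftHalf
  constructor
  · rintro ⟨t, ht⟩
    have ht1 : t < 2 := by nlinarith
    have ht2 : -2 < t := by nlinarith
    interval_cases t <;> split_ifs <;> omega
  · rintro (rfl | rfl)
    · simp
    · split_ifs
      · exact ⟨1, by push_cast; ring⟩
      · exact ⟨-1, by omega⟩

lemma sum_range_ite_dvd_sub_shiftHalf (g : ℕ → ℂ) {n : ℕ} (hn : n < 2 * M) :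
    ∑ m ∈ range (2 * M), (if (M : ℤ) ∣ (m : ℤ) - n then g m else 0) = g n + g (shiftHalf M n) := by
  have hshift : shiftHalf M n < 2 * M := by unfold shiftHalf; split_ifs <;> omega
  have hne : n ≠ shiftHalf M n := by unfold shiftHalf; split_ifs <;> omega
  have hsplit : ∀ m ∈ range (2 * M), (if (M : ℤ) ∣ (m : ℤ) - n then g m else 0)
      = (if n = m then g m else 0) + (if shiftHalf M n = m then g m else 0) := by
    intro m hm
    simp only [dvd_sub_iff_eq_or_eq_shiftHalf (mem_range.1 hm) hn]
    split_ifs <;> grind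
  rw [sum_congr rfl hsplit, sum_add_distrib, sum_ite_eq, sum_ite_eq, if_pos (mem_range.2 hn),
    if_pos (mem_range.2 hshift)]

lemma sum_idft_mul_idft_sub_two_mul (hM : M ≠ 0) (a b : ℕ → ℂ) (k : ℤ) :
    ∑ l ∈ range M, idft (2 * M) a (2 * l) * idft (2 * M) b (k - 2 * l)
      = 2⁻¹ * idft (2 * M) (fun n => b n * (a n + a (shiftHalf M n))) k := by
  set N := 2 * M
  have hterm (l : ℕ) : idft N a (2 * l) * idft N b (k - 2 * l)
      = (N : ℂ)⁻¹ * (N : ℂ)⁻¹ * ∑ n ∈ range N, ∑ m ∈ range N,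
          omegaN N ^ (2 * (l : ℤ) * ((m : ℤ) - n)) * (omegaN N ^ (k * (n : ℤ)) * b n * a m) := by
    rw [idft, idft, mul_mul_mul_comm, sum_mul_sum, sum_comm]
    congr 1
    refine sum_congr rfl fun n _ => sum_congr rfl fun m _ => ?_
    have hexp : omegaN N ^ ((2 * l : ℤ) * m) * omegaN N ^ ((k - 2 * l) * (n : ℤ))
        = omegaN N ^ (2 * (l : ℤ) * ((m : ℤ) - n)) * omegaN N ^ (k * (n : ℤ)) := by
      rw [← zpow_add₀ (omegaN_ne_zero N), ← zpow_add₀ (omegaN_ne_zero N)]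
      ring_nf
    linear_combination (a m * b n) * hexp
  have hinner (n : ℕ) (hn : n ∈ range N) :
      ∑ l ∈ range M, ∑ m ∈ range N,
        omegaN N ^ (2 * (l : ℤ) * ((m : ℤ) - n)) * (omegaN N ^ (k * (n : ℤ)) * b n * a m)
      = M * (omegaN N ^ (k * (n : ℤ)) * (b n * (a n + a (shiftHalf M n)))) := by
    rw [sum_comm]
    simp only [← sum_mul, N, sum_omegaN_two_mul_zpow hM, ite_mul, zero_mul]
    rw [sum_range_ite_dvd_sub_shiftHalf _ (mem_range.1 hn)]
    ring
  rw [sum_congr rfl fun l _ => hterm l, ← mul_sum, sum_comm, sum_congr rfl hinner, idft, ← mul_sum]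
  have hM' : (M : ℂ) ≠ 0 := Nat.cast_ne_zero.2 hM
  simp only [N]
  push_cast
  field_simp

end Downsampling

section Symbols

variable {N r : ℕ}

lemma U4r_pos (N r : ℕ) (n : ℤ) : 0 < U4r N r n := by
  rw [U4r]
  have hsc := Real.sin_sq_add_cos_sq (Real.pi * n / N)
  have h4 (y : ℝ) : y ^ (4 * r) = (y ^ 2) ^ (2 * r) := by rw [← pow_mul]; ring_nf
  rw [h4, h4]
  rcases le_total (1 / 2 : ℝ) (Real.cos (Real.pi * n / N) ^ 2) with h | h
  · have := pow_pos (show (0 : ℝ) < Real.cos (Real.pi * n / N) ^ 2 by linarith) (2 * r)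
    positivity
  · have := pow_pos (show (0 : ℝ) < Real.sin (Real.pi * n / N) ^ 2 by linarith) (2 * r)
    positivity

lemma betaF_mul_conj_add_alphaF_mul_conj (N r : ℕ) (n : ℤ) :
    betaF N r n * conj (betaF N r n) + alphaF N r n * conj (alphaF N r n) = 2 := by
  have hU := U4r_pos N r n
  have hω : omegaN N ^ n * omegaN N ^ (-n) = 1 := by
    rw [← zpow_add₀ (omegaN_ne_zero N), add_neg_cancel, zpow_zero]
  simp only [betaF, alphaF, map_mul, Complex.conj_ofReal, conj_omegaN_zpow]
  set B := Real.cos (Real.pi * n / N) ^ (2 * r) / √(U4r N r n)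
  set A := Real.sin (Real.pi * n / N) ^ (2 * r) / √(U4r N r n)
  have hreal : B * B + A * A = 2 := by
    have hne : U4r N r n ≠ 0 := hU.ne'
    rw [← sq, ← sq, div_pow, div_pow, Real.sq_sqrt hU.le, ← pow_mul, ← pow_mul, ← add_div,
      div_eq_iff hne, U4r]
    ring
  have hC : (B : ℂ) * B + (A : ℂ) * A = 2 := by exact_mod_cast hreal
  linear_combination (A : ℂ) * A * hω + hC

lemma U4r_zero (hr : r ≠ 0) : U4r N r 0 = 1 / 2 := by
  simp [U4r, hr]

lemma betaF_zero (hr : r ≠ 0) : betaF N r 0 = √2 := by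
  simp [betaF, U4r_zero hr]

lemma alphaF_zero (hr : r ≠ 0) : alphaF N r 0 = 0 := by
  simp [alphaF, hr]

lemma pi_mul_div_two_mul {M : ℕ} (hM : M ≠ 0) :
    Real.pi * ((M : ℤ) : ℝ) / ((2 * M : ℕ) : ℝ) = Real.pi / 2 := by
  push_cast
  field_simp [Nat.cast_ne_zero.2 hM]

lemma betaF_half {M : ℕ} (hM : M ≠ 0) (hr : r ≠ 0) : betaF (2 * M) r M = 0 := by
  rw [betaF, pi_mul_div_two_mul hM]
  simp [hr]

lemma alphaF_half {M : ℕ} (hM : M ≠ 0) (hr : r ≠ 0) : alphaF (2 * M) r M = -√2 := by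
  rw [alphaF, U4r, pi_mul_div_two_mul hM, omegaN_two_mul_zpow_self hM]
  simp [hr]

lemma pi_mul_sub_div (hN : N ≠ 0) {n : ℕ} (hn : n ≤ N) :
    Real.pi * (((N - n : ℕ) : ℤ) : ℝ) / N = Real.pi - Real.pi * ((n : ℤ) : ℝ) / N := by
  push_cast [hn]
  field_simp [Nat.cast_ne_zero.2 hN]

lemma U4r_sub (hN : N ≠ 0) {n : ℕ} (hn : n ≤ N) : U4r N r (N - n : ℕ) = U4r N r n := by
  simp only [U4r, pi_mul_sub_div hN hn, Real.cos_pi_sub, Real.sin_pi_sub,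
    (show Even (4 * r) from ⟨2 * r, by ring⟩).neg_pow]

lemma betaF_sub (hN : N ≠ 0) {n : ℕ} (hn : n ≤ N) : betaF N r (N - n : ℕ) = betaF N r n := by
  simp only [betaF, U4r_sub hN hn, pi_mul_sub_div hN hn, Real.cos_pi_sub,
    (show Even (2 * r) from ⟨r, by ring⟩).neg_pow]

lemma alphaF_sub (hN : N ≠ 0) {n : ℕ} (hn : n ≤ N) :
    alphaF N r (N - n : ℕ) = conj (alphaF N r n) := by
  simp only [alphaF, map_mul, conj_omegaN_zpow, Complex.conj_ofReal, U4r_sub hN hn,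
    pi_mul_sub_div hN hn, Real.sin_pi_sub]
  congr 1
  exact omegaN_zpow_eq_of_dvd hN ⟨1, by push_cast [hn]; ring⟩

end Symbols

def hilbertMult (N n : ℕ) : ℂ :=
  if n = 0 ∨ 2 * n = N then 0 else if 2 * n < N then -Complex.I else Complex.I

-- The DFTs of `ψ_μ`, of `φ_μ` and of the quasi-analytic packet `Ψ₊_μ = ψ_μ + i φ_μ`.
noncomputable def psiSpec (N r : ℕ) (μ : Fin 2) (n : ℕ) : ℂ :=
  if μ.val = 0 then betaF N r n else alphaF N r n

noncomputable def phiSpec (N r : ℕ) (μ : Fin 2) (n : ℕ) : ℂ :=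
  if μ.val = 0 then phi0hat N r n else phi1hat N r n

noncomputable def quasiSpec (N r : ℕ) (μ : Fin 2) (n : ℕ) : ℂ :=
  psiSpec N r μ n + Complex.I * phiSpec N r μ n

section Spectra

variable {N r : ℕ}

lemma psiW_eq_idft (N r : ℕ) (μ : Fin 2) : psiW N r μ = idft N (psiSpec N r μ) := by
  funext k
  fin_cases μ <;> rfl

lemma phiW_eq_idft (N r : ℕ) (μ : Fin 2) : phiW N r μ = idft N (phiSpec N r μ) := rfl

lemma HT_eq_idft (N : ℕ) (x : ℤ → ℂ) : HT N x = idft N (fun n => hilbertMult N n * dft N x n) := by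
  funext k
  simp only [HT, idft, hilbertMult]
  congr 1
  exact sum_congr rfl fun n _ => by ring

lemma isConjSymm_hilbertMult : IsConjSymm N (hilbertMult N) := by
  refine IsConjSymm.of_sub (by simp [hilbertMult]) fun n hn0 hn => ?_
  simp only [hilbertMult]
  split_ifs <;> first | omega | simp

lemma isConjSymm_psiSpec (hN : N ≠ 0) (hr : r ≠ 0) (μ : Fin 2) : IsConjSymm N (psiSpec N r μ) := by
  refine IsConjSymm.of_sub ?_ fun n _ hn => ?_
  · fin_cases μ <;> simp [psiSpec, betaF_zero hr, alphaF_zero hr]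
  · fin_cases μ
    · show betaF N r (N - n : ℕ) = conj (betaF N r n)
      rw [betaF_sub hN hn.le, betaF, Complex.conj_ofReal]
    · exact alphaF_sub hN hn.le

lemma phiSpec_eq_hilbertMult_mul {n : ℕ} (hn0 : n ≠ 0) (hn : 2 * n ≠ N) (μ : Fin 2) :
    phiSpec N r μ n = hilbertMult N n * psiSpec N r μ n := by
  fin_cases μ <;>
  · simp only [phiSpec, psiSpec, phi0hat, phi1hat, hilbertMult]
    split_ifs <;> first | omega | simp

lemma isConjSymm_phiSpec (hN : N ≠ 0) (hr : r ≠ 0) (μ : Fin 2) : IsConjSymm N (phiSpec N r μ) := by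
  refine IsConjSymm.of_sub ?_ fun n hn0 hn => ?_
  · fin_cases μ <;> simp [phiSpec, phi0hat, phi1hat]
  by_cases hhalf : 2 * n = N
  · rw [show N - n = n by omega]
    fin_cases μ <;> simp [phiSpec, phi0hat, phi1hat, hhalf, hn0.ne']
  · rw [phiSpec_eq_hilbertMult_mul hn0.ne' hhalf, phiSpec_eq_hilbertMult_mul (by omega) (by omega),
      map_mul, ← isConjSymm_hilbertMult n hn, ← isConjSymm_psiSpec hN hr μ n hn,
      Nat.mod_eq_of_lt (by omega)]

lemma quasiSpec_of_two_mul_lt {n : ℕ} (hn0 : n ≠ 0) (hn : 2 * n < N) (μ : Fin 2) :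
    quasiSpec N r μ n = 2 * psiSpec N r μ n := by
  rw [quasiSpec, phiSpec_eq_hilbertMult_mul hn0 hn.ne, hilbertMult, if_neg (by omega), if_pos hn]
  linear_combination (-psiSpec N r μ n) * Complex.I_sq

lemma quasiSpec_of_lt_two_mul {n : ℕ} (hn : N < 2 * n) (μ : Fin 2) : quasiSpec N r μ n = 0 := by
  rw [quasiSpec, phiSpec_eq_hilbertMult_mul (by omega) hn.ne', hilbertMult, if_neg (by omega),
    if_neg (by omega)]
  linear_combination psiSpec N r μ n * Complex.I_sq

lemma quasiSpec_zero (hr : r ≠ 0) (μ : Fin 2) :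
    quasiSpec N r μ 0 = if μ.val = 0 then √2 * (1 + Complex.I) else 0 := by
  fin_cases μ <;> simp [quasiSpec, psiSpec, phiSpec, phi0hat, phi1hat, betaF_zero hr,
    alphaF_zero hr, mul_add, mul_comm _ Complex.I]

lemma quasiSpec_half {M : ℕ} (hM : M ≠ 0) (hr : r ≠ 0) (μ : Fin 2) :
    quasiSpec (2 * M) r μ M = if μ.val = 0 then 0 else -√2 * (1 + Complex.I) := by
  fin_cases μ <;> simp [quasiSpec, psiSpec, phiSpec, phi0hat, phi1hat, betaF_half hM hr,
    alphaF_half hM hr, hM, mul_add, mul_comm _ Complex.I]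

lemma sum_psiSpec_mul_conj (N r : ℕ) (n : ℕ) :
    ∑ μ : Fin 2, psiSpec N r μ n * conj (psiSpec N r μ n) = 2 := by
  simpa [Fin.sum_univ_two, psiSpec] using betaF_mul_conj_add_alphaF_mul_conj N r n

lemma sum_quasiSpec_mul_conj {M : ℕ} (hM : M ≠ 0) (hr : r ≠ 0) {n : ℕ} (hn : n < 2 * M) :
    ∑ μ : Fin 2, quasiSpec (2 * M) r μ n * conj (quasiSpec (2 * M) r μ n)
      = 4 * (1 + Complex.I * hilbertMult (2 * M) n) := by
  have hnorm : (√2 * (1 + Complex.I) : ℂ) * (√2 * (1 + -Complex.I)) = 4 := by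
    have hsqrt : (√2 : ℂ) * √2 = 2 := by exact_mod_cast Real.mul_self_sqrt zero_le_two
    linear_combination (2 : ℂ) * hsqrt - (√2 : ℂ) ^ 2 * Complex.I_sq
  rcases Nat.eq_zero_or_pos n with rfl | hn0
  · simp [quasiSpec_zero hr, hilbertMult, hnorm]
  rcases lt_trichotomy n M with hlt | rfl | hgt
  · have hpsi := sum_psiSpec_mul_conj (2 * M) r n
    rw [Fin.sum_univ_two] at hpsi ⊢
    rw [quasiSpec_of_two_mul_lt hn0.ne' (by omega), quasiSpec_of_two_mul_lt hn0.ne' (by omega),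
      hilbertMult, if_neg (by omega), if_pos (by omega)]
    simp only [map_mul, map_ofNat]
    linear_combination 4 * hpsi + 4 * Complex.I_sq
  · simp [Fin.sum_univ_two, quasiSpec_half hM hr, hilbertMult, hnorm]
  · rw [hilbertMult, if_neg (by omega), if_neg (by omega)]
    simp [quasiSpec_of_lt_two_mul (by omega : 2 * M < 2 * n)]

lemma sum_quasiSpec_mul_conj_shiftHalf {M : ℕ} (hM : M ≠ 0) (hr : r ≠ 0) {n : ℕ}
    (hn : n < 2 * M) :
    ∑ μ : Fin 2, quasiSpec (2 * M) r μ n * conj (quasiSpec (2 * M) r μ (shiftHalf M n)) = 0 := by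
  rcases Nat.eq_zero_or_pos n with rfl | hn0
  · simp [shiftHalf, Nat.pos_of_ne_zero hM, quasiSpec_zero hr,
      quasiSpec_half hM hr]
  rcases lt_trichotomy n M with hlt | rfl | hgt
  · rw [shiftHalf, if_pos hlt]
    simp [quasiSpec_of_lt_two_mul (by omega : 2 * M < 2 * (n + M))]
  · simp [Fin.sum_univ_two, shiftHalf, quasiSpec_zero hr, quasiSpec_half hM hr]
  · simp [quasiSpec_of_lt_two_mul (by omega : 2 * M < 2 * n)]

lemma psiW_add_I_mul_phiW (N r : ℕ) (μ : Fin 2) (t : ℤ) :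
    psiW N r μ t + Complex.I * phiW N r μ t = idft N (quasiSpec N r μ) t := by
  rw [psiW_eq_idft, phiW_eq_idft, ← idft_const_mul, ← idft_add]
  rfl

lemma conj_psiW (hN : N ≠ 0) (hr : r ≠ 0) (μ : Fin 2) (t : ℤ) :
    conj (psiW N r μ t) = psiW N r μ t := by
  rw [psiW_eq_idft]
  exact conj_idft hN (isConjSymm_psiSpec hN hr μ) t

lemma conj_phiW (hN : N ≠ 0) (hr : r ≠ 0) (μ : Fin 2) (t : ℤ) :
    conj (phiW N r μ t) = phiW N r μ t := by
  rw [phiW_eq_idft]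
  exact conj_idft hN (isConjSymm_phiSpec hN hr μ) t

lemma conj_HT (hN : N ≠ 0) {x : ℤ → ℂ} (hx : ∀ k, (x k).im = 0) (k : ℤ) :
    conj (HT N x k) = HT N x k := by
  rw [HT_eq_idft]
  exact conj_idft hN (isConjSymm_hilbertMult.mul (isConjSymm_dft hx)) k

end Spectra

theorem sum_quasiAnalytic_synthesis {M r : ℕ} (hM : M ≠ 0) (hr : r ≠ 0) {x : ℤ → ℂ}
    (hx : Function.Periodic x (2 * M : ℕ)) (k : ℤ) :
    ∑ μ : Fin 2, ∑ l ∈ range M,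
      (ip (2 * M) x (fun t => psiW (2 * M) r μ (t - 2 * l)) -
          Complex.I * ip (2 * M) x (fun t => phiW (2 * M) r μ (t - 2 * l))) *
        (psiW (2 * M) r μ (k - 2 * l) + Complex.I * phiW (2 * M) r μ (k - 2 * l))
      = 2 * (x k + Complex.I * HT (2 * M) x k) := by
  simp only [ip_sub_I_mul_ip, psiW_add_I_mul_phiW, ip_translate_idft,
    sum_idft_mul_idft_sub_two_mul hM, ← mul_sum, ← idft_sum]
  have hspec : ∀ n < 2 * M, ∑ μ : Fin 2, quasiSpec (2 * M) r μ n *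
      (conj (quasiSpec (2 * M) r μ n) * dft (2 * M) x n +
        conj (quasiSpec (2 * M) r μ (shiftHalf M n)) * dft (2 * M) x (shiftHalf M n))
      = 4 * (dft (2 * M) x n + Complex.I * (hilbertMult (2 * M) n * dft (2 * M) x n)) := by
    intro n hn
    have h1 := sum_quasiSpec_mul_conj hM hr hn
    have h2 := sum_quasiSpec_mul_conj_shiftHalf hM hr hn
    rw [Fin.sum_univ_two] at h1 h2 ⊢
    linear_combination dft (2 * M) x n * h1 + dft (2 * M) x (shiftHalf M n) * h2
  rw [idft_congr hspec, idft_const_mul, idft_add, idft_const_mul, idft_dft (by omega) hx,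
    HT_eq_idft]
  ring

/-- One-level quasi-analytic analysis followed by synthesis produces twice
the periodic analytic signals: Σ_{μ,l} z₊^μ[l]·Ψ₊_μ[k−2l] = 2(x[k] + i·H(x)[k]) with
z₊^μ[l] = ⟨x,ψ_μ[·−2l]⟩ − i⟨x,φ_μ[·−2l]⟩ and Ψ₊_μ = ψ_μ + iφ_μ; symmetrically with
z₋^μ[l] = conj(z₊^μ[l]) and Ψ₋_μ = ψ_μ − iφ_μ one gets 2(x[k] − i·H(x)[k]). -/
theorem stmt_13 (j r : ℕ) (hj : 3 ≤ j) (hr : 1 ≤ r) (N : ℕ) (hN : N = 2 ^ j)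
    (x : ℤ → ℂ) (hper : ∀ k : ℤ, x (k + N) = x k) (hreal : ∀ k : ℤ, (x k).im = 0) :
    ∀ k : ℤ,
      (∑ μ : Fin 2, ∑ l ∈ Finset.range (N / 2),
        (ip N x (fun t => psiW N r μ (t - 2 * (l : ℤ))) -
            Complex.I * ip N x (fun t => phiW N r μ (t - 2 * (l : ℤ)))) *
          (psiW N r μ (k - 2 * (l : ℤ)) + Complex.I * phiW N r μ (k - 2 * (l : ℤ)))) =
        2 * (x k + Complex.I * HT N x k) ∧
      (∑ μ : Fin 2, ∑ l ∈ Finset.range (N / 2),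
        (starRingEnd ℂ) (ip N x (fun t => psiW N r μ (t - 2 * (l : ℤ))) -
            Complex.I * ip N x (fun t => phiW N r μ (t - 2 * (l : ℤ)))) *
          (psiW N r μ (k - 2 * (l : ℤ)) - Complex.I * phiW N r μ (k - 2 * (l : ℤ)))) =
        2 * (x k - Complex.I * HT N x k) := by
  intro k
  obtain ⟨M, rfl⟩ : ∃ M, N = 2 * M := ⟨2 ^ (j - 1), by rw [hN, ← pow_succ']; congr 1; omega⟩
  have hM : M ≠ 0 := by have := Nat.one_le_two_pow (n := j); omega
  have hN0 : 2 * M ≠ 0 := by omega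
  have hr0 : r ≠ 0 := by omega
  rw [Nat.mul_div_cancel_left M two_pos]
  have hplus := sum_quasiAnalytic_synthesis hM hr0 hper k
  refine ⟨hplus, ?_⟩
  have hconj : 2 * (x k - Complex.I * HT (2 * M) x k)
      = conj (2 * (x k + Complex.I * HT (2 * M) x k)) := by
    simp only [map_mul, map_add, map_ofNat, Complex.conj_I, conj_HT hN0 hreal,
      Complex.conj_eq_iff_im.2 (hreal k)]
    ring
  rw [hconj, ← hplus, map_sum]
  refine sum_congr rfl fun μ _ => ?_
  rw [map_sum]
  refine sum_congr rfl fun l _ => ?_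
  simp only [map_mul, map_add, Complex.conj_I, conj_psiW hN0 hr0, conj_phiW hN0 hr0]
  ring
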